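/- arXiv:2011.13502 — 2 statements merged into one kernel-verified Lean document; each statement's English description precedes it below -/
import Mathlib

section
/- (Preconditioning across surfaces.) Let V_h and V̂_h be finite-dimensional spaces, Π_h : V̂_h → V_h a linear bijection, A_h : V_h → V_h' symmetric positive semi-definite whose kernel consists exactly of the constant function(s) (when c = 0), and Â_h : V̂_h → V̂_h' symmetric positive definite. Assume the norm-equivalence bounds L₀⁻¹‖v‖₀ ≤ ‖Π_h v‖₀ ≤ L₀‖v‖₀ and L₁⁻¹|v|₁ ≤ |Π_h v|₁ ≤ L₁|v|₁, where |·|₁ denotes the energy seminorm and ‖·‖₀ the L²-type norm on the respective surfaces, together with a Poincaré inequality ‖v − v̄‖₀ ≤ c_P|v|₁ on the reference side. Then for any SPD B̂_h : V̂_h' → V̂_h, the operator B_h := Π_h B̂_h Π_h' satisfies κ(B_h A_h) ≤ C κ(B̂_h Â_h) with C depending only on L₀, L₁, c_P. -/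
/-!
For `w ∈ V_h` let `g` solve `Â g = Π_h' A_h w`. Then `⟨A_h B_h A_h w, w⟩ = ⟨Â B̂ Â g, g⟩`, so the
spectral bounds of `B̂ Â` transfer to `B_h A_h` as soon as `⟨Â g, g⟩` and `⟨A_h w, w⟩` are
comparable. Cauchy–Schwarz and the energy bound for `Π_h` give `⟨Â g, g⟩ ≤ L₁² ⟨A_h w, w⟩`.
Conversely, the mean-free lift `v = Π_h⁻¹ w − mean` is mapped by `Π_h` to `w` modulo the constants,
which span `ker A_h`, and its `Â`-energy is at most `(1 + c_P²) L₁² ⟨A_h w, w⟩` by the Poincaré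
inequality; testing `Â g` against `v` gives `⟨A_h w, w⟩ ≤ (1 + c_P²) L₁² ⟨Â g, g⟩`.
-/
open scoped RealInnerProductSpace

universe u v

/-- Rayleigh-quotient spectral bounds for `B ∘ A` relative to the `A`-(semi-)inner product on
the quotient modulo `ker A` (dual spaces identified with the space via Riesz). -/
def SpecBounds {V : Type*} [NormedAddCommGroup V] [InnerProductSpace ℝ V]
    (A B : V →ₗ[ℝ] V) (m M : ℝ) : Prop :=
  ∀ w : V, m * ⟪A w, w⟫ ≤ ⟪A (B (A w)), w⟫ ∧ ⟪A (B (A w)), w⟫ ≤ M * ⟪A w, w⟫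

theorem Real.le_sq_mul_of_sqrt_le_mul_sqrt {a b L : ℝ} (ha : 0 ≤ a) (hb : 0 ≤ b)
    (h : √a ≤ L * √b) : a ≤ L ^ 2 * b := by
  have := pow_le_pow_left₀ (Real.sqrt_nonneg a) h 2
  rwa [Real.sq_sqrt ha, mul_pow, Real.sq_sqrt hb] at this

theorem le_of_sq_le_mul_self {x k : ℝ} (hk : 0 ≤ k) (h : x ^ 2 ≤ k * x) : x ≤ k := by
  nlinarith

namespace LinearMap

variable {V : Type*} [NormedAddCommGroup V] [InnerProductSpace ℝ V] {T : V →ₗ[ℝ] V}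

theorem isPositive_of_inner_apply_comm (hs : ∀ x y, ⟪T x, y⟫ = ⟪T y, x⟫)
    (hp : ∀ x, 0 ≤ ⟪T x, x⟫) : T.IsPositive :=
  T.isPositive_iff.2 ⟨fun x y => by rw [hs, real_inner_comm], hp⟩

theorem IsPositive.inner_apply_sq_le (hT : T.IsPositive) (x y : V) :
    ⟪T x, y⟫ ^ 2 ≤ ⟪T x, x⟫ * ⟪T y, y⟫ := by
  have := BilinForm.apply_mul_apply_le_of_forall_zero_le ((innerₗ V).comp T)
    hT.inner_nonneg_left x y
  simp only [comp_apply, innerₗ_apply_apply] at this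
  rwa [hT.isSymmetric y x, real_inner_comm (T x) y, ← sq] at this

theorem IsPositive.apply_eq_zero_of_inner_eq_zero (hT : T.IsPositive) {x : V}
    (hx : ⟪T x, x⟫ = 0) : T x = 0 := by
  have := hT.inner_apply_sq_le x (T x)
  rw [hx, zero_mul, real_inner_self_eq_norm_sq] at this
  simpa using this

theorem IsPositive.inner_apply_self_pos (hT : T.IsPositive) (hinj : Function.Injective T)
    {x : V} (hx : x ≠ 0) : 0 < ⟪T x, x⟫ :=
  (hT.inner_nonneg_left x).lt_of_ne fun h =>
    hx (hinj (by rw [hT.apply_eq_zero_of_inner_eq_zero h.symm, map_zero]))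

theorem IsSymmetric.inner_sub_smul_of_apply_eq_zero (hT : T.IsSymmetric) {e : V}
    (he : T e = 0) (x y : V) (a : ℝ) : ⟪T x, y - a • e⟫ = ⟪T x, y⟫ := by
  rw [inner_sub_right, real_inner_smul_right, hT x e, he, inner_zero_right, mul_zero, sub_zero]

theorem IsSymmetric.inner_map_sub_smul_self (hT : T.IsSymmetric) {e : V} (he : T e = 0)
    (y : V) (a : ℝ) : ⟪T (y - a • e), y - a • e⟫ = ⟪T y, y⟫ := by
  rw [map_sub, map_smul, he, smul_zero, sub_zero, hT.inner_sub_smul_of_apply_eq_zero he]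

theorem inner_apply_self_le_inner_add_apply_self {S : V →ₗ[ℝ] V} (hS : ∀ x, 0 ≤ ⟪S x, x⟫)
    (x : V) : ⟪T x, x⟫ ≤ ⟪(T + S) x, x⟫ := by
  rw [add_apply, inner_add_left]
  linarith [hS x]

theorem injective_add_of_inner_apply_self_eq_zero {S : V →ₗ[ℝ] V} (hT : ∀ x, 0 ≤ ⟪T x, x⟫)
    (hS : ∀ x, 0 ≤ ⟪S x, x⟫) (hSdef : ∀ x, ⟪S x, x⟫ = 0 → x = 0) : Function.Injective (T + S) := by
  refine (injective_iff_map_eq_zero _).2 fun x hx => hSdef x (le_antisymm ?_ (hS x))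
  have h0 : ⟪T x, x⟫ + ⟪S x, x⟫ = 0 := by rw [← inner_add_left, ← add_apply, hx, inner_zero_left]
  linarith [hT x]

end LinearMap

theorem SpecBounds.le {V : Type*} [NormedAddCommGroup V] [InnerProductSpace ℝ V]
    {A B : V →ₗ[ℝ] V} {m M : ℝ} (h : SpecBounds A B m M) {x : V} (hx : 0 < ⟪A x, x⟫) :
    m ≤ M :=
  le_of_mul_le_mul_right ((h x).1.trans (h x).2) hx

section FictitiousSpace

open LinearMap

variable {V W : Type*} [NormedAddCommGroup V] [InnerProductSpace ℝ V] [FiniteDimensional ℝ V]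
  [NormedAddCommGroup W] [InnerProductSpace ℝ W] [FiniteDimensional ℝ W]
  {A : V →ₗ[ℝ] V} {Ahat : W →ₗ[ℝ] W} {P : W →ₗ[ℝ] V} {w : V} {g : W} {c : ℝ}

theorem inner_preimage_le_of_bounded (hA : A.IsPositive) (hc : 0 ≤ c)
    (hP : ∀ g, ⟪A (P g), P g⟫ ≤ c * ⟪Ahat g, g⟫) (hg : Ahat g = adjoint P (A w)) :
    ⟪Ahat g, g⟫ ≤ c * ⟪A w, w⟫ := by
  have hq : ⟪Ahat g, g⟫ = ⟪A w, P g⟫ := by rw [hg, adjoint_inner_left]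
  refine le_of_sq_le_mul_self (mul_nonneg hc (hA.inner_nonneg_left w)) ?_
  calc ⟪Ahat g, g⟫ ^ 2 = ⟪A w, P g⟫ ^ 2 := by rw [hq]
    _ ≤ ⟪A w, w⟫ * ⟪A (P g), P g⟫ := hA.inner_apply_sq_le w (P g)
    _ ≤ ⟪A w, w⟫ * (c * ⟪Ahat g, g⟫) := by gcongr; exacts [hA.inner_nonneg_left w, hP g]
    _ = c * ⟪A w, w⟫ * ⟪Ahat g, g⟫ := by ring

theorem inner_le_inner_preimage_of_decomposition (hAhat : Ahat.IsPositive)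
    (hc : 0 ≤ c) {v : W} (hv : ⟪A w, P v⟫ = ⟪A w, w⟫) (hv' : ⟪Ahat v, v⟫ ≤ c * ⟪A w, w⟫)
    (hg : Ahat g = adjoint P (A w)) : ⟪A w, w⟫ ≤ c * ⟪Ahat g, g⟫ := by
  have hAw : ⟪A w, w⟫ = ⟪Ahat g, v⟫ := by rw [← hv, hg, adjoint_inner_left]
  refine le_of_sq_le_mul_self (mul_nonneg hc (hAhat.inner_nonneg_left g)) ?_
  calc ⟪A w, w⟫ ^ 2 = ⟪Ahat g, v⟫ ^ 2 := by rw [hAw]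
    _ ≤ ⟪Ahat g, g⟫ * ⟪Ahat v, v⟫ := hAhat.inner_apply_sq_le g v
    _ ≤ ⟪Ahat g, g⟫ * (c * ⟪A w, w⟫) := by gcongr; exact hAhat.inner_nonneg_left g
    _ = c * ⟪Ahat g, g⟫ * ⟪A w, w⟫ := by ring

/-- Nepomnyashchikh's fictitious space lemma, in its semi-definite form. -/
theorem specBounds_comp_adjoint (hA : A.IsPositive) (hAhat : Ahat.IsPositive)
    (hAhatinj : Function.Injective Ahat) {Bhat : W →ₗ[ℝ] W} {mt Mt c₀ c₁ : ℝ} (hmt : 0 ≤ mt)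
    (hMt : 0 ≤ Mt) (hc₀ : 0 < c₀) (hc₁ : 0 ≤ c₁) (hP : ∀ g, ⟪A (P g), P g⟫ ≤ c₁ * ⟪Ahat g, g⟫)
    (hdec : ∀ w, ∃ v, ⟪A w, P v⟫ = ⟪A w, w⟫ ∧ ⟪Ahat v, v⟫ ≤ c₀ * ⟪A w, w⟫)
    (hB : SpecBounds Ahat Bhat mt Mt) :
    SpecBounds A (P ∘ₗ Bhat ∘ₗ adjoint P) (mt / c₀) (Mt * c₁) := by
  intro w
  obtain ⟨g, hg⟩ := injective_iff_surjective.mp hAhatinj (adjoint P (A w))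
  have hBf : ⟪A ((P ∘ₗ Bhat ∘ₗ adjoint P) (A w)), w⟫ = ⟪Ahat (Bhat (Ahat g)), g⟫ := by
    rw [comp_apply, comp_apply, hA.isSymmetric, hAhat.isSymmetric, hg, adjoint_inner_right]
  obtain ⟨v, hv, hv'⟩ := hdec w
  have hlow := inner_le_inner_preimage_of_decomposition hAhat hc₀.le hv hv' hg
  have hup := inner_preimage_le_of_bounded hA hc₁ hP hg
  rw [hBf]
  constructor
  · calc mt / c₀ * ⟪A w, w⟫ ≤ mt / c₀ * (c₀ * ⟪Ahat g, g⟫) := by gcongr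
      _ = mt * ⟪Ahat g, g⟫ := by field_simp
      _ ≤ _ := (hB g).1
  · calc ⟪Ahat (Bhat (Ahat g)), g⟫ ≤ Mt * ⟪Ahat g, g⟫ := (hB g).2
      _ ≤ Mt * (c₁ * ⟪A w, w⟫) := by gcongr
      _ = Mt * c₁ * ⟪A w, w⟫ := by ring

end FictitiousSpace

theorem inner_add_apply_sub_smul_le_of_poincare {W : Type*} [NormedAddCommGroup W]
    [InnerProductSpace ℝ W] {G M : W →ₗ[ℝ] W} (hG : G.IsPositive) {e : W} (he : G e = 0)
    {u : W} {a cP : ℝ}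
    (hP : √⟪M (u - a • e), u - a • e⟫ ≤ cP * √⟪G u, u⟫) (hM : 0 ≤ ⟪M (u - a • e), u - a • e⟫) :
    ⟪(G + M) (u - a • e), u - a • e⟫ ≤ (1 + cP ^ 2) * ⟪G u, u⟫ := by
  have hM_le := Real.le_sq_mul_of_sqrt_le_mul_sqrt hM (hG.inner_nonneg_left u) hP
  rw [LinearMap.add_apply, inner_add_left, hG.isSymmetric.inner_map_sub_smul_self he]
  linarith

theorem stmt9_general (L₀ L₁ cP : ℝ) (hL₁ : 0 < L₁) :
    ∃ C : ℝ, 0 < C ∧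
      ∀ (Vh : Type u) (Vhat : Type v)
        [NormedAddCommGroup Vh] [InnerProductSpace ℝ Vh] [FiniteDimensional ℝ Vh]
        [NormedAddCommGroup Vhat] [InnerProductSpace ℝ Vhat] [FiniteDimensional ℝ Vhat],
        ∀ (Ph : Vhat ≃ₗ[ℝ] Vh)
          (Ah Mh : Vh →ₗ[ℝ] Vh) (Ahat Ghat Mhat Bhat : Vhat →ₗ[ℝ] Vhat),
        (∀ v w : Vh, ⟪Ah v, w⟫ = ⟪Ah w, v⟫) → (∀ v : Vh, 0 ≤ ⟪Ah v, v⟫) →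
        (∀ v w : Vh, ⟪Mh v, w⟫ = ⟪Mh w, v⟫) → (∀ v : Vh, 0 ≤ ⟪Mh v, v⟫) →
        (∀ v : Vh, ⟪Mh v, v⟫ = 0 → v = 0) →
        (∀ v w : Vhat, ⟪Ghat v, w⟫ = ⟪Ghat w, v⟫) → (∀ v : Vhat, 0 ≤ ⟪Ghat v, v⟫) →
        (∀ v w : Vhat, ⟪Mhat v, w⟫ = ⟪Mhat w, v⟫) → (∀ v : Vhat, 0 ≤ ⟪Mhat v, v⟫) →
        (∀ v : Vhat, ⟪Mhat v, v⟫ = 0 → v = 0) →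
        Ahat = Ghat + Mhat →
        (∀ v w : Vhat, ⟪Bhat v, w⟫ = ⟪Bhat w, v⟫) → (∀ v : Vhat, 0 ≤ ⟪Bhat v, v⟫) →
        (∀ v : Vhat, ⟪Bhat v, v⟫ = 0 → v = 0) →
        ∀ onehat : Vhat, onehat ≠ 0 →
        LinearMap.ker Ah = Submodule.span ℝ {Ph onehat} →
        -- two-sided L²-norm equivalence for `Π_h` with constant `L₀`
        (∀ w : Vhat, L₀⁻¹ * Real.sqrt ⟪Mhat w, w⟫ ≤ Real.sqrt ⟪Mh (Ph w), Ph w⟫ ∧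
            Real.sqrt ⟪Mh (Ph w), Ph w⟫ ≤ L₀ * Real.sqrt ⟪Mhat w, w⟫) →
        -- two-sided energy-seminorm equivalence for `Π_h` with constant `L₁`
        (∀ w : Vhat, L₁⁻¹ * Real.sqrt ⟪Ghat w, w⟫ ≤ Real.sqrt ⟪Ah (Ph w), Ph w⟫ ∧
            Real.sqrt ⟪Ah (Ph w), Ph w⟫ ≤ L₁ * Real.sqrt ⟪Ghat w, w⟫) →
        -- Poincaré inequality on the reference surface
        (∀ w : Vhat,
            Real.sqrt ⟪Mhat (w - (⟪Mhat w, onehat⟫ / ⟪Mhat onehat, onehat⟫) • onehat),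
                w - (⟪Mhat w, onehat⟫ / ⟪Mhat onehat, onehat⟫) • onehat⟫ ≤
              cP * Real.sqrt ⟪Ghat w, w⟫) →
        ∀ mt Mt : ℝ, 0 < mt → SpecBounds Ahat Bhat mt Mt →
          ∃ m M : ℝ, 0 < m ∧
            SpecBounds Ah
              (Ph.toLinearMap ∘ₗ Bhat ∘ₗ LinearMap.adjoint Ph.toLinearMap) m M ∧
            M / m ≤ C * (Mt / mt) := by
  refine ⟨L₁ ^ 4 * (1 + cP ^ 2), by positivity, ?_⟩
  rintro Vh Vhat _ _ _ _ _ _ Ph Ah _ Ahat Ghat Mhat Bhat hAs hAp _ _ _ hGs hGp hMs hMp hMdef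
    rfl _ _ _ onehat hone hker _ hE hP mt Mt hmt hB
  have hA := LinearMap.isPositive_of_inner_apply_comm hAs hAp
  have hG := LinearMap.isPositive_of_inner_apply_comm hGs hGp
  have hAhat := hG.add (LinearMap.isPositive_of_inner_apply_comm hMs hMp)
  have hAhat_inj := LinearMap.injective_add_of_inner_apply_self_eq_zero hGp hMp hMdef
  have hE_low (g : Vhat) : ⟪Ghat g, g⟫ ≤ L₁ ^ 2 * ⟪Ah (Ph g), Ph g⟫ :=
    Real.le_sq_mul_of_sqrt_le_mul_sqrt (hGp g) (hAp _) ((inv_mul_le_iff₀ hL₁).1 (hE g).1)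
  have hAe : Ah (Ph onehat) = 0 := (hker ▸ Submodule.mem_span_singleton_self _ :)
  have hGe : Ghat onehat = 0 :=
    hG.apply_eq_zero_of_inner_eq_zero <| le_antisymm (by simpa [hAe] using hE_low onehat) (hGp _)
  have hMt : 0 ≤ Mt := hmt.le.trans (hB.le (hAhat.inner_apply_self_pos hAhat_inj hone))
  refine ⟨mt / ((1 + cP ^ 2) * L₁ ^ 2), Mt * L₁ ^ 2, by positivity,
    specBounds_comp_adjoint hA hAhat hAhat_inj hmt.le hMt (by positivity) (by positivity)
      (fun g => ?_) (fun w => ?_) hB, le_of_eq (by field_simp)⟩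
  · calc ⟪Ah (Ph g), Ph g⟫ ≤ L₁ ^ 2 * ⟪Ghat g, g⟫ :=
          Real.le_sq_mul_of_sqrt_le_mul_sqrt (hAp _) (hGp g) (hE g).2
      _ ≤ L₁ ^ 2 * ⟪(Ghat + Mhat) g, g⟫ := by
          gcongr; exact LinearMap.inner_apply_self_le_inner_add_apply_self hMp g
  · set u := Ph.symm w
    refine ⟨u - (⟪Mhat u, onehat⟫ / ⟪Mhat onehat, onehat⟫) • onehat, ?_, ?_⟩
    · simpa [u] using hA.isSymmetric.inner_sub_smul_of_apply_eq_zero hAe w w _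
    · calc _ ≤ (1 + cP ^ 2) * ⟪Ghat u, u⟫ :=
            inner_add_apply_sub_smul_le_of_poincare hG hGe (hP u) (hMp _)
        _ ≤ (1 + cP ^ 2) * (L₁ ^ 2 * ⟪Ah w, w⟫) := by gcongr; simpa [u] using hE_low u
        _ = _ := by ring

/-- preconditioning across surfaces.  Let `Π_h : V̂_h ≃ V_h` be a linear
bijection, `A_h` symmetric positive semi-definite with kernel spanned by the constant function
`Π_h 1̂` (the case `c = 0`), `M_h` an SPD mass (L²) operator on `V_h`, and
`Â_h = Ĝ_h + M̂_h` SPD on the reference side (`Ĝ_h` the PSD energy part, `M̂_h` the SPD mass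
part; `‖·‖₀² = ⟨M̂ ·,·⟩` and `|·|₁² = ⟨Ĝ ·,·⟩` resp. `⟨A_h ·,·⟩`).  Under the two-sided
`L²`- and energy-norm equivalences with constants `L₀, L₁` and the reference Poincaré
inequality `‖w − w̄‖₀ ≤ c_P |w|₁` (the mean `w̄` being the `M̂`-orthogonal projection onto the
constants `ℝ·1̂`), there is `C > 0` depending only on `L₀, L₁, c_P` such that for every SPD
`B̂_h`, the operator `B_h = Π_h B̂_h Π_h'` satisfies `κ(B_h A_h) ≤ C κ(B̂_h Â_h)`. -/
theorem stmt9 (L₀ L₁ cP : ℝ) (hL₀ : 0 < L₀) (hL₁ : 0 < L₁) (hcP : 0 < cP) :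
    ∃ C : ℝ, 0 < C ∧
      ∀ (Vh : Type u) (Vhat : Type v)
        [NormedAddCommGroup Vh] [InnerProductSpace ℝ Vh] [FiniteDimensional ℝ Vh]
        [NormedAddCommGroup Vhat] [InnerProductSpace ℝ Vhat] [FiniteDimensional ℝ Vhat],
        ∀ (Ph : Vhat ≃ₗ[ℝ] Vh)
          (Ah Mh : Vh →ₗ[ℝ] Vh) (Ahat Ghat Mhat Bhat : Vhat →ₗ[ℝ] Vhat),
        (∀ v w : Vh, ⟪Ah v, w⟫ = ⟪Ah w, v⟫) → (∀ v : Vh, 0 ≤ ⟪Ah v, v⟫) →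
        (∀ v w : Vh, ⟪Mh v, w⟫ = ⟪Mh w, v⟫) → (∀ v : Vh, 0 ≤ ⟪Mh v, v⟫) →
        (∀ v : Vh, ⟪Mh v, v⟫ = 0 → v = 0) →
        (∀ v w : Vhat, ⟪Ghat v, w⟫ = ⟪Ghat w, v⟫) → (∀ v : Vhat, 0 ≤ ⟪Ghat v, v⟫) →
        (∀ v w : Vhat, ⟪Mhat v, w⟫ = ⟪Mhat w, v⟫) → (∀ v : Vhat, 0 ≤ ⟪Mhat v, v⟫) →
        (∀ v : Vhat, ⟪Mhat v, v⟫ = 0 → v = 0) →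
        Ahat = Ghat + Mhat →
        (∀ v w : Vhat, ⟪Bhat v, w⟫ = ⟪Bhat w, v⟫) → (∀ v : Vhat, 0 ≤ ⟪Bhat v, v⟫) →
        (∀ v : Vhat, ⟪Bhat v, v⟫ = 0 → v = 0) →
        ∀ onehat : Vhat, onehat ≠ 0 →
        LinearMap.ker Ah = Submodule.span ℝ {Ph onehat} →
        -- two-sided L²-norm equivalence for `Π_h` with constant `L₀`
        (∀ w : Vhat, L₀⁻¹ * Real.sqrt ⟪Mhat w, w⟫ ≤ Real.sqrt ⟪Mh (Ph w), Ph w⟫ ∧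
            Real.sqrt ⟪Mh (Ph w), Ph w⟫ ≤ L₀ * Real.sqrt ⟪Mhat w, w⟫) →
        -- two-sided energy-seminorm equivalence for `Π_h` with constant `L₁`
        (∀ w : Vhat, L₁⁻¹ * Real.sqrt ⟪Ghat w, w⟫ ≤ Real.sqrt ⟪Ah (Ph w), Ph w⟫ ∧
            Real.sqrt ⟪Ah (Ph w), Ph w⟫ ≤ L₁ * Real.sqrt ⟪Ghat w, w⟫) →
        -- Poincaré inequality on the reference surface
        (∀ w : Vhat,
            Real.sqrt ⟪Mhat (w - (⟪Mhat w, onehat⟫ / ⟪Mhat onehat, onehat⟫) • onehat),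
                w - (⟪Mhat w, onehat⟫ / ⟪Mhat onehat, onehat⟫) • onehat⟫ ≤
              cP * Real.sqrt ⟪Ghat w, w⟫) →
        ∀ mt Mt : ℝ, 0 < mt → SpecBounds Ahat Bhat mt Mt →
          ∃ m M : ℝ, 0 < m ∧
            SpecBounds Ah
              (Ph.toLinearMap ∘ₗ Bhat ∘ₗ LinearMap.adjoint Ph.toLinearMap) m M ∧
            M / m ≤ C * (Mt / mt) :=
  stmt9_general L₀ L₁ cP hL₁
end

section
/- (Two-level preconditioner for a semi-definite operator via its definite shift.) Let 𝒱 be a finite-dimensional space with L²-type norm ‖·‖ and energy seminorm |·|₁, and let 𝒜⁰, 𝒜¹ : 𝒱 → 𝒱' be defined by ⟨𝒜⁰v,w⟩ = a(v,w) and ⟨𝒜¹v,w⟩ = a(v,w) + (v,w), where a is a symmetric positive semi-definite bilinear form with |v|₁² = a(v,v), and the kernel of 𝒜⁰ consists of constants. Assume the Poincaré inequality ‖v − v̄‖ ≤ c_P |v|₁ for all v ∈ 𝒱. Then for any symmetric positive definite B : 𝒱' → 𝒱, κ(B𝒜⁰) ≤ C κ(B𝒜¹), where κ(B𝒜⁰)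 is the condition number on the quotient 𝒱/N(𝒜⁰) and C depends only on c_P and |M| (the measure used in defining means). -/
open scoped RealInnerProductSpace

section

variable {V : Type*} [NormedAddCommGroup V] [InnerProductSpace ℝ V]

namespace LinearMap

theorem isPositive_of_inner_map_comm {A : V →ₗ[ℝ] V} (hsym : ∀ v w, ⟪A v, w⟫ = ⟪A w, v⟫)
    (hpos : ∀ v, 0 ≤ ⟪A v, v⟫) : A.IsPositive :=
  (isPositive_iff A).mpr ⟨fun v w => by rw [hsym, real_inner_comm], hpos⟩

theorem IsSymmetric.inner_map_comm {A : V →ₗ[ℝ] V} (hA : A.IsSymmetric) (v w : V) :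
    ⟪A v, w⟫ = ⟪A w, v⟫ := by
  rw [hA, real_inner_comm]

theorem IsSymmetric.inner_map_sub_of_map_eq_zero {A : V →ₗ[ℝ] V} (hA : A.IsSymmetric) {u : V}
    (hu : A u = 0) (v : V) : ⟪A (v - u), v - u⟫ = ⟪A v, v⟫ := by
  rw [map_sub, hu, sub_zero, inner_sub_right, hA v u, hu, inner_zero_right, sub_zero]

theorem IsSymmetric.inner_add_map_sub_le {A M : V →ₗ[ℝ] V} (hA : A.IsSymmetric) {u v : V}
    (hu : A u = 0) {c : ℝ} (hM : ⟪M (v - u), v - u⟫ ≤ c * ⟪A v, v⟫) :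
    ⟪(A + M) (v - u), v - u⟫ ≤ (1 + c) * ⟪A v, v⟫ := by
  rw [add_apply, inner_add_left, hA.inner_map_sub_of_map_eq_zero hu]
  linarith

theorem IsPositive.inner_map_sq_le {A : V →ₗ[ℝ] V} (hA : A.IsPositive) (v w : V) :
    ⟪A v, w⟫ ^ 2 ≤ ⟪A v, v⟫ * ⟪A w, w⟫ := by
  rw [sq]
  nth_rewrite 2 [hA.isSymmetric.inner_map_comm]
  exact BilinForm.apply_mul_apply_le_of_forall_zero_le ((innerₗ V).comp A)
    hA.inner_nonneg_left v w

theorem surjective_of_inner_map_self_eq_zero [FiniteDimensional ℝ V] {T : V →ₗ[ℝ] V}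
    (hT : ∀ v, ⟪T v, v⟫ = 0 → v = 0) : Function.Surjective T := by
  refine injective_iff_surjective.mp ((injective_iff_map_eq_zero T).mpr fun v hv => hT v ?_)
  rw [hv, inner_zero_left]

section FictitiousSpace

variable {A Ã : V →ₗ[ℝ] V} (hA : A.IsPositive) (hle : ∀ v, ⟪A v, v⟫ ≤ ⟪Ã v, v⟫)
  {w z : V} (hz : Ã z = A w)
include hA hle hz

theorem inner_preimage_le : ⟪A w, z⟫ ≤ ⟪A w, w⟫ := by
  have hAz : ⟪A z, z⟫ ≤ ⟪A w, z⟫ := hz ▸ hle z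
  have hCS := hA.inner_map_sq_le w z
  nlinarith [hA.inner_nonneg_left z, hA.inner_nonneg_left w]

omit hle in
theorem inner_le_mul_inner_preimage (hÃ : Ã.IsPositive) {c : ℝ} (hc : 0 ≤ c) {w' : V}
    (hw' : A w' = A w) (hlift : ⟪Ã w', w'⟫ ≤ c * ⟪A w, w⟫) : ⟪A w, w⟫ ≤ c * ⟪A w, z⟫ := by
  have hpair : ⟪Ã z, w'⟫ = ⟪A w, w⟫ := by
    rw [hz, hA.isSymmetric, hw', real_inner_comm]
  have hCS := hÃ.inner_map_sq_le z w'
  rw [hpair, hz] at hCS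
  have hq : 0 ≤ ⟪A w, z⟫ := hz ▸ hÃ.inner_nonneg_left z
  nlinarith [hA.inner_nonneg_left w, mul_le_mul_of_nonneg_left hlift hq, mul_nonneg hc hq]

end FictitiousSpace

end LinearMap

open LinearMap in
theorem SpecBounds.of_le_of_lift {A Ã B : V →ₗ[ℝ] V} {m M c : ℝ} (hA : A.IsPositive)
    (hÃ : Ã.IsPositive) (hÃsurj : Function.Surjective Ã) (hle : ∀ v, ⟪A v, v⟫ ≤ ⟪Ã v, v⟫)
    (hlift : ∀ v, ∃ v', A v' = A v ∧ ⟪Ã v', v'⟫ ≤ c * ⟪A v, v⟫) (hc : 0 < c) (hm : 0 ≤ m)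
    (h : SpecBounds Ã B m M) : SpecBounds A B (m / c) M := by
  intro w
  obtain ⟨z, hz⟩ := hÃsurj (A w)
  obtain ⟨w', hw', hw'c⟩ := hlift w
  have hform : ⟪Ã (B (Ã z)), z⟫ = ⟪A (B (A w)), w⟫ := by
    rw [hÃ.isSymmetric, hA.isSymmetric, hz]
  have hq : ⟪Ã z, z⟫ = ⟪A w, z⟫ := by rw [hz]
  have hup := inner_preimage_le hA hle hz
  have hlow := inner_le_mul_inner_preimage hA hz hÃ hc.le hw' hw'c
  obtain ⟨h₁, h₂⟩ := h z
  rw [hform, hq] at h₁ h₂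
  have hp := hA.inner_nonneg_left w
  refine ⟨?_, ?_⟩
  · calc m / c * ⟪A w, w⟫ ≤ m / c * (c * ⟪A w, z⟫) := by gcongr
      _ = m * ⟪A w, z⟫ := by field_simp
      _ ≤ _ := h₁
  · rcases (hz ▸ hÃ.inner_nonneg_left z : 0 ≤ ⟪A w, z⟫).eq_or_lt with hq0 | hq0
    · have hp0 : ⟪A w, w⟫ = 0 := le_antisymm (by simpa [← hq0] using hlow) hp
      simpa [hp0, ← hq0] using h₂
    · have hM : 0 ≤ M := hm.trans (le_of_mul_le_mul_right (h₁.trans h₂) hq0)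
      exact h₂.trans (mul_le_mul_of_nonneg_left hup hM)

end

open LinearMap in
theorem stmt13_general (cP : ℝ) :
    ∃ C : ℝ, 0 < C ∧
      ∀ (𝒱 : Type) [NormedAddCommGroup 𝒱] [InnerProductSpace ℝ 𝒱] [FiniteDimensional ℝ 𝒱],
      ∀ (A0 Mo B : 𝒱 →ₗ[ℝ] 𝒱),
        (∀ v w : 𝒱, ⟪A0 v, w⟫ = ⟪A0 w, v⟫) → (∀ v : 𝒱, 0 ≤ ⟪A0 v, v⟫) →
        (∀ v w : 𝒱, ⟪Mo v, w⟫ = ⟪Mo w, v⟫) → (∀ v : 𝒱, 0 ≤ ⟪Mo v, v⟫) →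
        (∀ v : 𝒱, ⟪Mo v, v⟫ = 0 → v = 0) →
        (∀ v w : 𝒱, ⟪B v, w⟫ = ⟪B w, v⟫) → (∀ v : 𝒱, 0 ≤ ⟪B v, v⟫) →
        (∀ v : 𝒱, ⟪B v, v⟫ = 0 → v = 0) →
        ∀ onev : 𝒱, onev ≠ 0 →
        LinearMap.ker A0 = Submodule.span ℝ {onev} →
        -- Poincaré inequality with the `Mo`-orthogonal projection onto constants as the mean
        (∀ v : 𝒱,
            Real.sqrt ⟪Mo (v - (⟪Mo v, onev⟫ / ⟪Mo onev, onev⟫) • onev),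
                v - (⟪Mo v, onev⟫ / ⟪Mo onev, onev⟫) • onev⟫ ≤
              cP * Real.sqrt ⟪A0 v, v⟫) →
        ∀ m M : ℝ, 0 < m → SpecBounds (A0 + Mo) B m M →
          ∃ m' M' : ℝ, 0 < m' ∧ SpecBounds A0 B m' M' ∧ M' / m' ≤ C * (M / m) := by
  refine ⟨1 + cP ^ 2, by positivity, ?_⟩
  intro 𝒱 _ _ _ A0 Mo B hA0sym hA0pos hMosym hMopos hModef _ _ _ onev _ hker hPoin m M hm hspec
  have hA0 : A0.IsPositive := isPositive_of_inner_map_comm hA0sym hA0pos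
  have hsplit : ∀ v, ⟪(A0 + Mo) v, v⟫ = ⟪A0 v, v⟫ + ⟪Mo v, v⟫ := fun v => inner_add_left _ _ _
  have hsurj : Function.Surjective (A0 + Mo) := surjective_of_inner_map_self_eq_zero fun v hv =>
    hModef v (le_antisymm (by linarith [hsplit v, hA0pos v]) (hMopos v))
  have hA0onev : A0 onev = 0 := by
    rw [← mem_ker, hker]
    exact Submodule.mem_span_singleton_self onev
  have hlift : ∀ v, ∃ v', A0 v' = A0 v ∧ ⟪(A0 + Mo) v', v'⟫ ≤ (1 + cP ^ 2) * ⟪A0 v, v⟫ := by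
    intro v
    have hPv := (Real.sqrt_le_iff.mp (hPoin v)).2
    rw [mul_pow, Real.sq_sqrt (hA0pos v)] at hPv
    have hu : A0 ((⟪Mo v, onev⟫ / ⟪Mo onev, onev⟫) • onev) = 0 := by
      rw [map_smul, hA0onev, smul_zero]
    exact ⟨_, by rw [map_sub, hu, sub_zero], hA0.isSymmetric.inner_add_map_sub_le hu hPv⟩
  refine ⟨m / (1 + cP ^ 2), M, by positivity, hspec.of_le_of_lift hA0
    (hA0.add (isPositive_of_inner_map_comm hMosym hMopos)) hsurj
    (fun v => by linarith [hsplit v, hMopos v]) hlift (by positivity) hm.le, ?_⟩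
  rw [div_div_eq_mul_div, mul_comm M, mul_div_assoc]

/-- two-level preconditioning of a semi-definite operator via its definite
shift.  Let `𝒜⁰` be a symmetric positive semi-definite operator (the energy form
`a(v,w) = ⟨𝒜⁰v,w⟩`, `|v|₁² = ⟨𝒜⁰v,v⟩`), `Mo` an SPD mass operator realizing the L²-inner
product, and `𝒜¹ = 𝒜⁰ + Mo`.  Assume the kernel of `𝒜⁰` is spanned by the constant `onev ≠ 0`
and the Poincaré inequality `‖v − v̄‖ ≤ c_P |v|₁` holds, the mean `v̄` being the
`Mo`-orthogonal projection on the constants.  Then there is `C > 0` depending only on `c_P`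
such that for every SPD `B`, `κ(B𝒜⁰) ≤ C κ(B𝒜¹)` (condition numbers on the quotient
`𝒱 / ker 𝒜⁰`). -/
theorem stmt13 (cP : ℝ) (hcP : 0 < cP) :
    ∃ C : ℝ, 0 < C ∧
      ∀ (𝒱 : Type) [NormedAddCommGroup 𝒱] [InnerProductSpace ℝ 𝒱] [FiniteDimensional ℝ 𝒱],
      ∀ (A0 Mo B : 𝒱 →ₗ[ℝ] 𝒱),
        (∀ v w : 𝒱, ⟪A0 v, w⟫ = ⟪A0 w, v⟫) → (∀ v : 𝒱, 0 ≤ ⟪A0 v, v⟫) →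
        (∀ v w : 𝒱, ⟪Mo v, w⟫ = ⟪Mo w, v⟫) → (∀ v : 𝒱, 0 ≤ ⟪Mo v, v⟫) →
        (∀ v : 𝒱, ⟪Mo v, v⟫ = 0 → v = 0) →
        (∀ v w : 𝒱, ⟪B v, w⟫ = ⟪B w, v⟫) → (∀ v : 𝒱, 0 ≤ ⟪B v, v⟫) →
        (∀ v : 𝒱, ⟪B v, v⟫ = 0 → v = 0) →
        ∀ onev : 𝒱, onev ≠ 0 →
        LinearMap.ker A0 = Submodule.span ℝ {onev} →
        -- Poincaré inequality with the `Mo`-orthogonal projection onto constants as the mean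
        (∀ v : 𝒱,
            Real.sqrt ⟪Mo (v - (⟪Mo v, onev⟫ / ⟪Mo onev, onev⟫) • onev),
                v - (⟪Mo v, onev⟫ / ⟪Mo onev, onev⟫) • onev⟫ ≤
              cP * Real.sqrt ⟪A0 v, v⟫) →
        ∀ m M : ℝ, 0 < m → SpecBounds (A0 + Mo) B m M →
          ∃ m' M' : ℝ, 0 < m' ∧ SpecBounds A0 B m' M' ∧ M' / m' ≤ C * (M / m) :=
  stmt13_general cP
end
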